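/- arXiv:2203.01696 — 2 statements merged into one kernel-verified Lean document; each statement's English description precedes it below -/
import Mathlib

section
/- Let g : A → Ã be a function on A ⊆ ℝ^n such that there is a countable measurable partition (A_k)_k of A and diffeomorphisms g_k : int(A_k) → g_k(int(A_k)) with g restricted to A_k equal to g_k. If a random variable X on A has Lebesgue density p_X, then Y = g(X) has Lebesgue density p_Y(y) = Σ_{k : y ∈ g_k(A_k)} |det J_{g_k^{-1}}(y)| · p_X(g_k^{-1}(y)). -/
open MeasureTheory
open scoped ENNReal NNReal

/-- Change of variables for a piecewise diffeomorphism: if `g` agrees on each part `A_k` of a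
countable measurable partition of `A` with a diffeomorphism `g_k` (diffeomorphic on the
interior of `A_k`, the boundaries being null), and a random variable `X` supported in `A` has
Lebesgue density `pX`, then `Y = g(X)` has Lebesgue density
`y ↦ ∑_{k : y ∈ g_k(int A_k)} |det J_{g_k⁻¹}(y)| · pX (g_k⁻¹ y)`. -/
theorem piecewise_diffeomorphism_density {n : ℕ}
    (A : Set (EuclideanSpace ℝ (Fin n)))
    (Ak : ℕ → Set (EuclideanSpace ℝ (Fin n)))
    (hAkMeas : ∀ k, MeasurableSet (Ak k))
    (hdisj : Pairwise (Function.onFun Disjoint Ak))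
    (hcover : (⋃ k, Ak k) = A)
    (hbdryNull : ∀ k, volume (Ak k \ interior (Ak k)) = 0)
    (g : EuclideanSpace ℝ (Fin n) → EuclideanSpace ℝ (Fin n)) (hg : Measurable g)
    (gk gkinv : ℕ → EuclideanSpace ℝ (Fin n) → EuclideanSpace ℝ (Fin n))
    (hgk : ∀ k, Set.EqOn g (gk k) (Ak k))
    (hgkDiffeo : ∀ k, ∀ x ∈ interior (Ak k),
      ContDiffWithinAt ℝ 1 (gk k) (interior (Ak k)) x)
    (hgkInj : ∀ k, Set.InjOn (gk k) (interior (Ak k)))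
    (hgkinv : ∀ k, ∀ x ∈ interior (Ak k), gkinv k (gk k x) = x)
    (J : ℕ → EuclideanSpace ℝ (Fin n) →
      (EuclideanSpace ℝ (Fin n) →L[ℝ] EuclideanSpace ℝ (Fin n)))
    (hJ : ∀ k, ∀ y ∈ gk k '' interior (Ak k),
      HasFDerivWithinAt (gkinv k) (J k y) (gk k '' interior (Ak k)) y)
    (pX : EuclideanSpace ℝ (Fin n) → ℝ≥0∞) (hpX : Measurable pX)
    (hsupp : ∀ x ∉ A, pX x = 0) :
    Measure.map g (volume.withDensity pX)
      = volume.withDensity (fun y =>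
          ∑' k, (gk k '' interior (Ak k)).indicator
            (fun y' => ENNReal.ofReal |(J k y').det| * pX (gkinv k y')) y) := by
  set T : ℕ → Set (EuclideanSpace ℝ (Fin n)) := fun k => gk k '' interior (Ak k) with hT
  set d : ℕ → EuclideanSpace ℝ (Fin n) → ℝ≥0∞ :=
    fun k y => ENNReal.ofReal |(J k y).det| * pX (gkinv k y) with hd
  have hgkCont : ∀ k, ContinuousOn (gk k) (interior (Ak k)) :=
    fun k x hx => (hgkDiffeo k x hx).continuousWithinAt
  have hTmeas : ∀ k, MeasurableSet (T k) := fun k =>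
    (measurableSet_interior).image_of_continuousOn_injOn (hgkCont k) (hgkInj k)
  have hinjinv : ∀ k, Set.InjOn (gkinv k) (T k) := by
    intro k y1 hy1 y2 hy2 h
    obtain ⟨x1, hx1, rfl⟩ := hy1
    obtain ⟨x2, hx2, rfl⟩ := hy2
    rw [hgkinv k x1 hx1, hgkinv k x2 hx2] at h
    rw [h]
  have himg : ∀ k, gkinv k '' T k = interior (Ak k) := by
    intro k
    ext x
    constructor
    · rintro ⟨y, ⟨z, hz, rfl⟩, rfl⟩
      rw [hgkinv k z hz]; exact hz
    · intro hx
      exact ⟨gk k x, ⟨x, hx, rfl⟩, hgkinv k x hx⟩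
  have hginv : ∀ k, ∀ y ∈ T k, g (gkinv k y) = y := by
    rintro k y ⟨x, hx, rfl⟩
    rw [hgkinv k x hx]
    exact hgk k (interior_subset hx)
  have hdmeas : ∀ k, AEMeasurable ((T k).indicator (d k)) volume := by
    intro k
    rw [aemeasurable_indicator_iff (hTmeas k)]
    have h1 : AEMeasurable (fun y => ENNReal.ofReal |(J k y).det|) (volume.restrict (T k)) :=
      aemeasurable_ofReal_abs_det_fderivWithin volume (hTmeas k) (hJ k)
    have hcontinv : ContinuousOn (gkinv k) (T k) :=
      fun y hy => (hJ k y hy).continuousWithinAt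
    have h2 : AEMeasurable (fun y => pX (gkinv k y)) (volume.restrict (T k)) :=
      hpX.comp_aemeasurable (hcontinv.aemeasurable (hTmeas k))
    exact h1.mul h2
  have hN : volume (A \ ⋃ k, interior (Ak k)) = 0 := by
    have hsub : A \ (⋃ k, interior (Ak k)) ⊆ ⋃ k, (Ak k \ interior (Ak k)) := by
      rintro x ⟨hxA, hxU⟩
      rw [← hcover] at hxA
      obtain ⟨k, hk⟩ := Set.mem_iUnion.1 hxA
      exact Set.mem_iUnion.2 ⟨k, hk, fun h => hxU (Set.mem_iUnion.2 ⟨k, h⟩)⟩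
    exact measure_mono_null hsub
      (le_antisymm ((measure_iUnion_le _).trans (by simp [hbdryNull])) (zero_le))
  ext S hS
  rw [Measure.map_apply hg hS, withDensity_apply _ (hg hS), withDensity_apply _ hS]
  rw [← lintegral_indicator (hg hS)]
  set f : EuclideanSpace ℝ (Fin n) → ℝ≥0∞ := (g ⁻¹' S).indicator pX with hf
  have hfmeas : Measurable f := hpX.indicator (hg hS)
  -- pointwise decomposition off a null set
  have key : ∀ x, x ∉ A \ (⋃ k, interior (Ak k)) →
      f x = ∑' k, (interior (Ak k)).indicator f x := by
    intro x hx
    by_cases hxU : x ∈ ⋃ k, interior (Ak k)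
    · obtain ⟨k0, hk0⟩ := Set.mem_iUnion.1 hxU
      rw [tsum_eq_single k0]
      · simp [Set.indicator_of_mem hk0]
      · intro j hj
        have hdisj' : Disjoint (interior (Ak j)) (interior (Ak k0)) :=
          (hdisj hj).mono interior_subset interior_subset
        exact Set.indicator_of_notMem (Set.disjoint_right.1 hdisj' hk0) f
    · have hxA : x ∉ A := fun h => hx ⟨h, hxU⟩
      have hf0 : f x = 0 := by
        by_cases hxS : x ∈ g ⁻¹' S
        · rw [hf]; rw [Set.indicator_of_mem hxS]; exact hsupp x hxA
        · exact Set.indicator_of_notMem hxS pX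
      rw [hf0]
      symm
      simp only [ENNReal.tsum_eq_zero]
      intro k
      exact Set.indicator_of_notMem (fun h => hxU (Set.mem_iUnion.2 ⟨k, h⟩)) f
  have hae : f =ᵐ[volume] fun x => ∑' k, (interior (Ak k)).indicator f x := by
    refine measure_mono_null (fun x hx => ?_) hN
    simp only [Set.mem_setOf_eq] at hx
    by_contra h
    exact hx (key x h)
  rw [lintegral_congr_ae hae]
  rw [lintegral_tsum (fun k => (hfmeas.indicator measurableSet_interior).aemeasurable)]
  rw [lintegral_tsum (fun k => (hdmeas k).restrict)]
  congr 1
  funext k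
  -- per-piece change of variables
  rw [lintegral_indicator measurableSet_interior, ← himg k,
    lintegral_image_eq_lintegral_abs_det_fderiv_mul volume (hTmeas k) (hJ k) (hinjinv k) f]
  have hcong : ∀ y ∈ T k,
      ENNReal.ofReal |(J k y).det| * f (gkinv k y) = S.indicator (d k) y := by
    intro y hy
    have hging := hginv k y hy
    by_cases hyS : y ∈ S
    · have : gkinv k y ∈ g ⁻¹' S := by simp [Set.mem_preimage, hging, hyS]
      rw [hf]
      simp only [Set.indicator_of_mem this, Set.indicator_of_mem hyS]
      rfl
    · have : gkinv k y ∉ g ⁻¹' S := by simp [Set.mem_preimage, hging, hyS]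
      rw [hf]
      simp [Set.indicator_of_notMem this, Set.indicator_of_notMem hyS]
  rw [setLIntegral_congr_fun (hTmeas k) (fun y hy => hcong y hy)]
  rw [lintegral_indicator hS, Measure.restrict_restrict hS]
  rw [lintegral_indicator (hTmeas k), Measure.restrict_restrict (hTmeas k), Set.inter_comm]
end

section
/- Let S, A be finite sets, π, π' : S → (probability distributions on A) two policies, and ρ a probability distribution on S with support S̄ and minimum mass ν > 0 on S̄. If Σ_{s,a} |π(a|s)ρ(s) − π'(a|s)ρ'(s)| ≤ 2ε and Σ_s |ρ(s) − ρ'(s)| ≤ 2ε for some occupancy ρ' of π', then for every s ∈ S̄, Σ_a |π(a|s) − π'(a|s)| ≤ 4ε/ν. -/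
/-!
Write `r (p - p') = (p r - p' r') + p' (r' - r)`. Summing absolute values over actions and using
that `p'` is a probability vector bounds `ρ(s) ‖π(·|s) - π'(·|s)‖₁` by the joint ℓ¹ distance at `s`
plus `|ρ(s) - ρ'(s)|`, hence by `4ε`; dividing by `ρ(s) ≥ ν` gives the claim.
-/

open Finset

lemma mul_abs_sub_le_abs_mul_sub_mul_add {p p' r r' : ℝ} (hp' : 0 ≤ p') (hr : 0 ≤ r) :
    r * |p - p'| ≤ |p * r - p' * r'| + p' * |r - r'| := by
  calc r * |p - p'| = |(p * r - p' * r') + p' * (r' - r)| := by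
        rw [← abs_of_nonneg hr, ← abs_mul, abs_of_nonneg hr]; congr 1; ring
    _ ≤ |p * r - p' * r'| + |p' * (r' - r)| := abs_add_le _ _
    _ = |p * r - p' * r'| + p' * |r - r'| := by rw [abs_mul, abs_of_nonneg hp', abs_sub_comm r' r]

lemma mul_sum_abs_sub_le_sum_abs_mul_sub_mul_add {ι : Type*} [Fintype ι] {p p' : ι → ℝ}
    (hp'0 : ∀ i, 0 ≤ p' i) (hp'1 : ∑ i, p' i = 1) {r r' : ℝ} (hr : 0 ≤ r) :
    r * ∑ i, |p i - p' i| ≤ ∑ i, |p i * r - p' i * r'| + |r - r'| := by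
  calc r * ∑ i, |p i - p' i| = ∑ i, r * |p i - p' i| := mul_sum _ _ _
    _ ≤ ∑ i, (|p i * r - p' i * r'| + p' i * |r - r'|) :=
        sum_le_sum fun i _ => mul_abs_sub_le_abs_mul_sub_mul_add (hp'0 i) hr
    _ = ∑ i, |p i * r - p' i * r'| + |r - r'| := by
        rw [sum_add_distrib, ← sum_mul, hp'1, one_mul]

theorem policy_close_on_support_general {S A : Type*} [Fintype S] [Fintype A]
    (π π' : S → A → ℝ)
    (hπ'0 : ∀ s a, 0 ≤ π' s a)
    (hπ'1 : ∀ s, ∑ a : A, π' s a = 1)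
    (ρ ρ' : S → ℝ)
    (ν ε : ℝ) (hν : 0 < ν)
    (hmin : ∀ s, ρ s ≠ 0 → ν ≤ ρ s)
    (hjoint : ∑ s : S, ∑ a : A, |π s a * ρ s - π' s a * ρ' s| ≤ 2 * ε)
    (hmarg : ∑ s : S, |ρ s - ρ' s| ≤ 2 * ε) :
    ∀ s : S, ρ s ≠ 0 → ∑ a : A, |π s a - π' s a| ≤ 4 * ε / ν := by
  intro s hs
  have hνs : ν ≤ ρ s := hmin s hs
  have hjoint_s : ∑ a, |π s a * ρ s - π' s a * ρ' s| ≤ 2 * ε :=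
    (single_le_sum (fun t _ => sum_nonneg fun a _ => abs_nonneg _) (mem_univ s)).trans hjoint
  have hmarg_s : |ρ s - ρ' s| ≤ 2 * ε :=
    (single_le_sum (fun t _ => abs_nonneg (ρ t - ρ' t)) (mem_univ s)).trans hmarg
  have hdist_nonneg : 0 ≤ ∑ a, |π s a - π' s a| := sum_nonneg fun a _ => abs_nonneg _
  have hweighted : ρ s * ∑ a, |π s a - π' s a| ≤ 4 * ε := by
    have := mul_sum_abs_sub_le_sum_abs_mul_sub_mul_add (p := π s) (r' := ρ' s) (hπ'0 s) (hπ'1 s)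
      (hν.le.trans hνs)
    linarith
  rw [le_div_iff₀ hν]
  calc (∑ a, |π s a - π' s a|) * ν ≤ ρ s * ∑ a, |π s a - π' s a| := by
        rw [mul_comm]; exact mul_le_mul_of_nonneg_right hνs hdist_nonneg
    _ ≤ 4 * ε := hweighted

/-- Closeness of state-action occupancies and of state occupancies implies uniform per-state
closeness of the conditional policies on the support of `ρ`: if the joint occupancies are
`2ε`-close in ℓ¹ and the state marginals are `2ε`-close in ℓ¹, then for every state `s` in
the support of `ρ` (with minimum mass `ν > 0`), `∑_a |π(a|s) − π'(a|s)| ≤ 4ε/ν`. -/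
theorem policy_close_on_support {S A : Type*} [Fintype S] [Fintype A]
    (π π' : S → A → ℝ)
    (hπ0 : ∀ s a, 0 ≤ π s a) (hπ'0 : ∀ s a, 0 ≤ π' s a)
    (hπ1 : ∀ s, ∑ a : A, π s a = 1) (hπ'1 : ∀ s, ∑ a : A, π' s a = 1)
    (ρ ρ' : S → ℝ)
    (hρ0 : ∀ s, 0 ≤ ρ s) (hρ'0 : ∀ s, 0 ≤ ρ' s)
    (ν ε : ℝ) (hν : 0 < ν) (hε : 0 ≤ ε)
    (hmin : ∀ s, ρ s ≠ 0 → ν ≤ ρ s)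
    (hjoint : ∑ s : S, ∑ a : A, |π s a * ρ s - π' s a * ρ' s| ≤ 2 * ε)
    (hmarg : ∑ s : S, |ρ s - ρ' s| ≤ 2 * ε) :
    ∀ s : S, ρ s ≠ 0 → ∑ a : A, |π s a - π' s a| ≤ 4 * ε / ν :=
  policy_close_on_support_general π π' hπ'0 hπ'1 ρ ρ' ν ε hν hmin hjoint hmarg
end
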